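/- Let (G,δ,ε) be a comonad on a category A with a natural transformation t: G∘G ⟹ G∘G satisfying G(ε)t = ε_G, ε_G t = G(ε), t_G G(t) δ_G = G(δ) t, δ_G t = G(t) t_G G(δ), and the QYBE. Define t_{n+1} := (t_n)_G ∘ Gⁿ(t) with t₁ = t, and ε⁽ⁿ⁾ := ε ∘ G(ε) ∘ ⋯ ∘ G^{n−1}(ε): Gⁿ ⟹ Id. Then (ε⁽ⁿ⁾)_G = G(ε⁽ⁿ⁾) ∘ t_n and Gⁿ(ε) = ε_{Gⁿ} ∘ t_n for all n ≥ 1. -/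

import Mathlib

/-!
Both identities are proved by induction on `n`, using only how `t` interacts with `ε`. For the
second, `Gⁿ⁺¹(ε) = Gⁿ(G(ε)) = Gⁿ(ε_G ∘ t)` and the induction hypothesis at `GM` finishes. For the
first, unfold `ε⁽ⁿ⁺¹⁾_G = ε⁽ⁿ⁾_G ∘ Gⁿ(ε_G)`, apply the induction hypothesis, rewrite `ε_G = G(ε) ∘ t`,
and slide `Gⁿ⁺¹(ε)` past `t_n` by naturality of `t_n`.
-/

open CategoryTheory

variable {A : Type*} [Category A]

/-- `gpow G n M` is the `n`-th power `Gⁿ M` of the endofunctor `G` applied to `M`. -/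
def gpow (Gf : A ⥤ A) : ℕ → A → A
  | 0, M => M
  | n+1, M => gpow Gf n (Gf.obj M)

/-- `gmap G n f = Gⁿ(f)`. -/
def gmap (Gf : A ⥤ A) : (n : ℕ) → {X Y : A} → (X ⟶ Y) → (gpow Gf n X ⟶ gpow Gf n Y)
  | 0, _, _, f => f
  | n+1, _, _, f => gmap Gf n (Gf.map f)

lemma gpow_succ_out (Gf : A ⥤ A) : ∀ (n : ℕ) (M : A), gpow Gf (n+1) M = Gf.obj (gpow Gf n M)
  | 0, _ => rfl
  | n+1, M => gpow_succ_out Gf n (Gf.obj M)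

lemma gpow_add (Gf : A ⥤ A) : ∀ (a b : ℕ) (M : A), gpow Gf a (gpow Gf b M) = gpow Gf (a + b) M
  | a, 0, M => rfl
  | a, b+1, M => by
      rw [Nat.add_succ]
      exact gpow_add Gf a b (Gf.obj M)

lemma gpow_add' (Gf : A ⥤ A) (a b c : ℕ) (h : a + b = c) (M : A) :
    gpow Gf a (gpow Gf b M) = gpow Gf c M := by subst h; exact gpow_add Gf a b M

/-- `tpow G t n` is the component family of `t⁽ⁿ⁺¹⁾`, where `t⁽¹⁾ = t` and
`t⁽ⁿ⁺¹⁾ = (t⁽ⁿ⁾)_G ∘ Gⁿ(t)`. -/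
def tpow (Gf : A ⥤ A) (t : Gf ⋙ Gf ⟶ Gf ⋙ Gf) :
    (n : ℕ) → (M : A) → (gpow Gf (n+2) M ⟶ gpow Gf (n+2) M)
  | 0, M => t.app M
  | n+1, M => gmap Gf (n+1) (t.app M) ≫ tpow Gf t n (Gf.obj M)


/-- `epow G n M` is the component at `M` of `ε⁽ⁿ⁾ = ε ∘ G(ε) ∘ ⋯ ∘ G^{n−1}(ε) : Gⁿ ⟹ Id`. -/
def epow (G : Comonad A) : (n : ℕ) → (M : A) → (gpow G.toFunctor n M ⟶ M)
  | 0, M => 𝟙 M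
  | n+1, M => gmap G.toFunctor n (G.ε.app M) ≫ epow G n M

-- `reassoc_of%` and rewriting with `Category.assoc` fail on the composites below, whose middle
-- objects (`gpow G (k+2) M` versus `gpow G (k+1) (G.obj M)`) agree only up to unfolding.
lemma comp_comp_eq_of_comp_eq {C : Type*} [Category C] {X Y Y' Z W : C} {f : X ⟶ Y}
    {g : Y ⟶ Z} {f' : X ⟶ Y'} {g' : Y' ⟶ Z} (h : f ≫ g = f' ≫ g') (k : Z ⟶ W) :
    f ≫ g ≫ k = f' ≫ g' ≫ k := by
  rw [← Category.assoc, h, Category.assoc]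

section Powers

variable (Gf : A ⥤ A)

lemma gmap_comp : ∀ (n : ℕ) {X Y Z : A} (f : X ⟶ Y) (g : Y ⟶ Z),
    gmap Gf n (f ≫ g) = gmap Gf n f ≫ gmap Gf n g
  | 0, _, _, _, _, _ => rfl
  | n+1, _, _, _, f, g => by
      show gmap Gf n (Gf.map (f ≫ g)) = _
      rw [Gf.map_comp]
      exact gmap_comp n (Gf.map f) (Gf.map g)

lemma gmap_succ_comp_eqToHom : ∀ (n : ℕ) {X Y : A} (f : X ⟶ Y),
    gmap Gf (n+1) f ≫ eqToHom (gpow_succ_out Gf n Y) =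
      eqToHom (gpow_succ_out Gf n X) ≫ Gf.map (gmap Gf n f)
  | 0, _, _, f => by
      show Gf.map f ≫ eqToHom rfl = eqToHom rfl ≫ Gf.map f
      simp
  | n+1, _, _, f => gmap_succ_comp_eqToHom n (Gf.map f)

variable (t : Gf ⋙ Gf ⟶ Gf ⋙ Gf)

lemma tpow_naturality : ∀ (k : ℕ) {X Y : A} (f : X ⟶ Y),
    gmap Gf (k+2) f ≫ tpow Gf t k Y = tpow Gf t k X ≫ gmap Gf (k+2) f
  | 0, _, _, f => t.naturality f
  | k+1, X, Y, f => by
      have hG : gmap Gf (k+2) (Gf.map f) ≫ gmap Gf (k+1) (t.app Y) =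
          gmap Gf (k+1) (t.app X) ≫ gmap Gf (k+2) (Gf.map f) :=
        (gmap_comp Gf (k+1) _ _).symm.trans
          ((congrArg (gmap Gf (k+1)) (t.naturality f)).trans (gmap_comp Gf (k+1) _ _))
      show gmap Gf (k+2) (Gf.map f) ≫ gmap Gf (k+1) (t.app Y) ≫ tpow Gf t k (Gf.obj Y) =
        (gmap Gf (k+1) (t.app X) ≫ tpow Gf t k (Gf.obj X)) ≫ gmap Gf (k+2) (Gf.map f)
      exact (comp_comp_eq_of_comp_eq hG _).trans
        ((_ ≫= tpow_naturality k (Gf.map f)).trans (Category.assoc _ _ _).symm)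

lemma gmap_counit_eq_tpow_comp_counit (ε : Gf ⟶ 𝟭 A)
    (hGε : ∀ M : A, t.app M ≫ ε.app (Gf.obj M) = Gf.map (ε.app M)) :
    ∀ (k : ℕ) (M : A), gmap Gf (k+1) (ε.app M) =
      tpow Gf t k M ≫ eqToHom (gpow_succ_out Gf (k+1) M) ≫ ε.app (gpow Gf (k+1) M)
  | 0, M => by
      show Gf.map (ε.app M) = t.app M ≫ 𝟙 _ ≫ ε.app (Gf.obj M)
      rw [Category.id_comp, hGε]
  | k+1, M => by
      show gmap Gf (k+1) (Gf.map (ε.app M)) =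
        (gmap Gf (k+1) (t.app M) ≫ tpow Gf t k (Gf.obj M)) ≫
          eqToHom (gpow_succ_out Gf (k+1) (Gf.obj M)) ≫ ε.app (gpow Gf (k+1) (Gf.obj M))
      rw [← hGε, gmap_comp, gmap_counit_eq_tpow_comp_counit ε hGε k (Gf.obj M)]
      exact (Category.assoc _ _ _).symm

end Powers

lemma epow_obj_eq_tpow_comp_map_epow (G : Comonad A)
    (t : G.toFunctor ⋙ G.toFunctor ⟶ G.toFunctor ⋙ G.toFunctor)
    (hεG : ∀ M : A, t.app M ≫ G.toFunctor.map (G.ε.app M) = G.ε.app (G.toFunctor.obj M)) :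
    ∀ (k : ℕ) (M : A), epow G (k+1) (G.toFunctor.obj M) =
      tpow G.toFunctor t k M ≫ eqToHom (gpow_succ_out G.toFunctor (k+1) M) ≫
        G.toFunctor.map (epow G (k+1) M)
  | 0, M => by
      show G.ε.app (G.obj M) ≫ 𝟙 _ = t.app M ≫ 𝟙 _ ≫ G.map (G.ε.app M ≫ 𝟙 M)
      simp [hεG]
  | k+1, M => by
      have hnat : gmap G.toFunctor (k+1) (G.map (G.ε.app M)) ≫ tpow G.toFunctor t k M =
          tpow G.toFunctor t k (G.obj M) ≫ gmap G.toFunctor (k+1) (G.map (G.ε.app M)) :=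
        tpow_naturality G.toFunctor t k (G.ε.app M)
      have hout : gmap G.toFunctor (k+1) (G.map (G.ε.app M)) ≫
            eqToHom (gpow_succ_out G.toFunctor (k+1) M) =
          eqToHom (gpow_succ_out G.toFunctor (k+1) (G.obj M)) ≫
            G.map (gmap G.toFunctor (k+1) (G.ε.app M)) :=
        gmap_succ_comp_eqToHom G.toFunctor (k+1) (G.ε.app M)
      show gmap G.toFunctor (k+1) (G.ε.app (G.obj M)) ≫ epow G (k+1) (G.obj M) =
        (gmap G.toFunctor (k+1) (t.app M) ≫ tpow G.toFunctor t k (G.obj M)) ≫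
          eqToHom (gpow_succ_out G.toFunctor (k+1) (G.obj M)) ≫
            G.map (gmap G.toFunctor (k+1) (G.ε.app M) ≫ epow G (k+1) M)
      rw [epow_obj_eq_tpow_comp_map_epow G t hεG k M, ← hεG, gmap_comp, Functor.map_comp]
      exact (Category.assoc _ _ _).trans
        ((_ ≫= (comp_comp_eq_of_comp_eq hnat _).trans (_ ≫= comp_comp_eq_of_comp_eq hout _)).trans
          (Category.assoc _ _ _).symm)

theorem strong_braiding_counit_identities_general (G : Comonad A)
    (t : G.toFunctor ⋙ G.toFunctor ⟶ G.toFunctor ⋙ G.toFunctor)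
    (hεG : ∀ M : A, t.app M ≫ G.toFunctor.map (G.ε.app M) = G.ε.app (G.toFunctor.obj M))
    (hGε : ∀ M : A, t.app M ≫ G.ε.app (G.toFunctor.obj M) = G.toFunctor.map (G.ε.app M)) :
    (∀ (k : ℕ) (M : A),
      epow G (k+1) (G.toFunctor.obj M) =
        tpow G.toFunctor t k M ≫
          eqToHom (show gpow G.toFunctor (k+2) M = G.toFunctor.obj (gpow G.toFunctor (k+1) M)
            from gpow_succ_out G.toFunctor (k+1) M) ≫
          G.toFunctor.map (epow G (k+1) M)) ∧
    (∀ (k : ℕ) (M : A),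
      gmap G.toFunctor (k+1) (G.ε.app M) =
        tpow G.toFunctor t k M ≫
          eqToHom (show gpow G.toFunctor (k+2) M = G.toFunctor.obj (gpow G.toFunctor (k+1) M)
            from gpow_succ_out G.toFunctor (k+1) M) ≫
          G.ε.app (gpow G.toFunctor (k+1) M)) :=
  ⟨epow_obj_eq_tpow_comp_map_epow G t hεG, gmap_counit_eq_tpow_comp_counit G.toFunctor t G.ε hGε⟩

/-- if `t` is a strong braiding on the comonad `(G,δ,ε)` and
`t_{n+1} = (t_n)_G ∘ Gⁿ(t)` with `t₁ = t` (here `tpow _ t k = t_{k+1}`), and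
`ε⁽ⁿ⁾ = ε ∘ G(ε) ∘ ⋯ ∘ G^{n−1}(ε)`, then `(ε⁽ⁿ⁾)_G = G(ε⁽ⁿ⁾) ∘ t_n` and
`Gⁿ(ε) = ε_{Gⁿ} ∘ t_n` for all `n ≥ 1` (stated with `n = k+1`). -/
theorem strong_braiding_counit_identities (G : Comonad A)
    (t : G.toFunctor ⋙ G.toFunctor ⟶ G.toFunctor ⋙ G.toFunctor)
    (hεG : ∀ M : A, t.app M ≫ G.toFunctor.map (G.ε.app M) = G.ε.app (G.toFunctor.obj M))
    (hGε : ∀ M : A, t.app M ≫ G.ε.app (G.toFunctor.obj M) = G.toFunctor.map (G.ε.app M))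
    (hGδ : ∀ M : A, G.δ.app (G.toFunctor.obj M) ≫ G.toFunctor.map (t.app M) ≫
        t.app (G.toFunctor.obj M) = t.app M ≫ G.toFunctor.map (G.δ.app M))
    (hδG : ∀ M : A, t.app M ≫ G.δ.app (G.toFunctor.obj M) =
      G.toFunctor.map (G.δ.app M) ≫ t.app (G.toFunctor.obj M) ≫ G.toFunctor.map (t.app M))
    (hqybe : ∀ M : A, G.toFunctor.map (t.app M) ≫ t.app (G.toFunctor.obj M) ≫
        G.toFunctor.map (t.app M) =
      t.app (G.toFunctor.obj M) ≫ G.toFunctor.map (t.app M) ≫ t.app (G.toFunctor.obj M)) :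
    (∀ (k : ℕ) (M : A),
      epow G (k+1) (G.toFunctor.obj M) =
        tpow G.toFunctor t k M ≫
          eqToHom (show gpow G.toFunctor (k+2) M = G.toFunctor.obj (gpow G.toFunctor (k+1) M)
            from gpow_succ_out G.toFunctor (k+1) M) ≫
          G.toFunctor.map (epow G (k+1) M)) ∧
    (∀ (k : ℕ) (M : A),
      gmap G.toFunctor (k+1) (G.ε.app M) =
        tpow G.toFunctor t k M ≫
          eqToHom (show gpow G.toFunctor (k+2) M = G.toFunctor.obj (gpow G.toFunctor (k+1) M)
            from gpow_succ_out G.toFunctor (k+1) M) ≫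
          G.ε.app (gpow G.toFunctor (k+1) M)) :=
  strong_braiding_counit_identities_general G t hεG hGε
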